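/- arXiv:1510.02430 — 11 statements merged into one kernel-verified Lean document; each statement's English description precedes it below -/
import Mathlib

section
/- The map sending a pair (p₀, p₁) ∈ (0,1) × (0,1) to (log(p₁/p₀), log(p₀p₁/((1−p₀)(1−p₁)))) is a bijection from (0,1) × (0,1) onto ℝ × ℝ. In other words, for every (θ, φ) ∈ ℝ² there exists a unique pair (p₀, p₁) ∈ (0,1)² whose log relative risk is θ and whose log odds product is φ. -/
set_option maxHeartbeats 1000000

open Real

private lemma rrlop_log_expand (t x : ℝ) (hx0 : 0 < x) (hx1 : x < 1) (htx0 : 0 < t*x)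
    (htx : t*x < 1) :
    Real.log ((x * (t*x)) / ((1-x)*(1-t*x))) =
      Real.log x + Real.log (t*x) - Real.log (1-x) - Real.log (1-t*x) := by
  have h1 : (1:ℝ)-x ≠ 0 := by nlinarith
  have h2 : (1:ℝ)-t*x ≠ 0 := by nlinarith
  rw [Real.log_div (mul_ne_zero (ne_of_gt hx0) (ne_of_gt htx0)) (mul_ne_zero h1 h2),
      Real.log_mul (ne_of_gt hx0) (ne_of_gt htx0), Real.log_mul h1 h2]
  ring

private lemma rrlop_key (t φ : ℝ) (ht : 0 < t) :
    ∃! x : ℝ, (0 < x ∧ x < 1 ∧ t*x < 1) ∧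
      Real.log ((x * (t*x)) / ((1-x)*(1-t*x))) = φ := by
  set S : Set ℝ := {x | 0 < x ∧ x < 1 ∧ t*x < 1} with hS
  set F : ℝ → ℝ := fun x => Real.log ((x * (t*x)) / ((1-x)*(1-t*x))) with hF
  have hFdef : ∀ z : ℝ, F z = Real.log ((z * (t*z)) / ((1-z)*(1-t*z))) := fun z => rfl
  have hmono : ∀ x ∈ S, ∀ y ∈ S, x < y → F x < F y := by
    intro x hx y hy hxy
    obtain ⟨hx0, hx1, hxt⟩ := hx
    obtain ⟨hy0, hy1, hyt⟩ := hy
    rw [hFdef x, hFdef y]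
    rw [rrlop_log_expand t x hx0 hx1 (by positivity) hxt,
        rrlop_log_expand t y hy0 hy1 (by positivity) hyt]
    have h1 : Real.log x < Real.log y := Real.log_lt_log hx0 hxy
    have h2 : Real.log (t*x) < Real.log (t*y) :=
      Real.log_lt_log (by positivity) (by nlinarith)
    have h3 : Real.log (1-y) < Real.log (1-x) :=
      Real.log_lt_log (by linarith) (by linarith)
    have h4 : Real.log (1-t*y) < Real.log (1-t*x) :=
      Real.log_lt_log (by linarith) (by nlinarith)
    linarith
  -- the parameter m = min 1 t⁻¹
  set m : ℝ := min 1 t⁻¹ with hm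
  have hm0 : 0 < m := lt_min one_pos (by positivity)
  have hm1 : m ≤ 1 := min_le_left _ _
  have hmt : t * m ≤ 1 := by
    have := min_le_right 1 t⁻¹
    calc t * m ≤ t * t⁻¹ := by nlinarith
    _ = 1 := by field_simp
  have htm0 : 0 < t * m := by positivity
  -- lower point a
  set ε₁ : ℝ := min (1/2) (Real.exp ((φ - Real.log m - Real.log (t*m) - 2*Real.log 2 - 1)/2)) with hε₁
  have hε₁0 : 0 < ε₁ := lt_min (by norm_num) (Real.exp_pos _)
  have hε₁half : ε₁ ≤ 1/2 := min_le_left _ _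
  set a : ℝ := m * ε₁ with ha
  have ha0 : 0 < a := by positivity
  have haS : a ∈ S := by
    refine ⟨ha0, ?_, ?_⟩
    · nlinarith
    · nlinarith
  have hFa : F a < φ := by
    obtain ⟨_, ha1, hat⟩ := haS
    rw [hFdef a, rrlop_log_expand t a ha0 ha1 (by positivity) hat]
    have hla : Real.log a = Real.log m + Real.log ε₁ :=
      Real.log_mul (ne_of_gt hm0) (ne_of_gt hε₁0)
    have hlta : Real.log (t*a) = Real.log (t*m) + Real.log ε₁ := by
      rw [ha, ← mul_assoc]
      exact Real.log_mul (ne_of_gt htm0) (ne_of_gt hε₁0)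
    have h1a : (1:ℝ)/2 ≤ 1 - a := by nlinarith
    have h1ta : (1:ℝ)/2 ≤ 1 - t*a := by nlinarith
    have hb1 : Real.log (1/2) ≤ Real.log (1-a) := Real.log_le_log (by norm_num) h1a
    have hb2 : Real.log (1/2) ≤ Real.log (1-t*a) := Real.log_le_log (by norm_num) h1ta
    have hhalf : Real.log (1/2) = -Real.log 2 := by
      rw [Real.log_div one_ne_zero (by norm_num), Real.log_one]; ring
    have hεb : Real.log ε₁ ≤ (φ - Real.log m - Real.log (t*m) - 2*Real.log 2 - 1)/2 := by
      calc Real.log ε₁ ≤ Real.log (Real.exp ((φ - Real.log m - Real.log (t*m) - 2*Real.log 2 - 1)/2)) :=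
            Real.log_le_log hε₁0 (min_le_right _ _)
      _ = _ := Real.log_exp _
    rw [hla, hlta]
    rw [hhalf] at hb1 hb2
    linarith
  -- upper point b
  set ε₂ : ℝ := min (1/2) (Real.exp (Real.log (m/2) + Real.log (t*m/2) - φ - 1)) with hε₂
  have hε₂0 : 0 < ε₂ := lt_min (by norm_num) (Real.exp_pos _)
  have hε₂half : ε₂ ≤ 1/2 := min_le_left _ _
  set b : ℝ := m * (1 - ε₂) with hb
  have hb0 : 0 < b := by nlinarith
  have hbm : b < m := by nlinarith
  have hbS : b ∈ S := by
    refine ⟨hb0, by linarith, ?_⟩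
    calc t * b < t * m := by nlinarith
    _ ≤ 1 := hmt
  have hFb : φ < F b := by
    obtain ⟨_, hb1, hbt⟩ := hbS
    rw [hFdef b, rrlop_log_expand t b hb0 hb1 (by positivity) hbt]
    have hlb : Real.log (m/2) ≤ Real.log b :=
      Real.log_le_log (by positivity) (by nlinarith)
    have hltb : Real.log (t*m/2) ≤ Real.log (t*b) :=
      Real.log_le_log (by positivity) (by nlinarith)
    have hεb : Real.log ε₂ ≤ Real.log (m/2) + Real.log (t*m/2) - φ - 1 := by
      calc Real.log ε₂ ≤ Real.log (Real.exp (Real.log (m/2) + Real.log (t*m/2) - φ - 1)) :=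
            Real.log_le_log hε₂0 (min_le_right _ _)
      _ = _ := Real.log_exp _
    have hkey : Real.log (1-b) + Real.log (1-t*b) ≤ Real.log ε₂ := by
      rcases min_cases 1 t⁻¹ with ⟨hmeq, _⟩ | ⟨hmeq, hle⟩
      · -- m = 1
        have hmeq' : m = 1 := by rw [hm]; exact hmeq
        have : 1 - b = ε₂ := by rw [hb, hmeq']; ring
        rw [this]
        have : Real.log (1-t*b) ≤ 0 := Real.log_nonpos (by linarith) (by nlinarith)
        linarith
      · -- m = t⁻¹
        have hmeq' : m = t⁻¹ := by rw [hm]; exact hmeq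
        have htm1 : t * m = 1 := by rw [hmeq']; field_simp
        have : 1 - t*b = ε₂ := by rw [hb, ← mul_assoc, htm1]; ring
        rw [this]
        have : Real.log (1-b) ≤ 0 := Real.log_nonpos (by linarith) (by linarith)
        linarith
    linarith
  have hab : a < b := by
    by_contra h
    push_neg at h
    rcases eq_or_lt_of_le h with h | h
    · rw [h] at hFb; linarith
    · have := hmono b hbS a haS h; linarith
  have hsub : Set.Icc a b ⊆ S := by
    rintro x ⟨hxa, hxb⟩
    obtain ⟨_, hb1, hbt⟩ := hbS
    refine ⟨lt_of_lt_of_le ha0 hxa, lt_of_le_of_lt hxb hb1, ?_⟩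
    calc t * x ≤ t * b := by nlinarith
    _ < 1 := hbt
  have hcont : ContinuousOn F (Set.Icc a b) := by
    intro x hx
    obtain ⟨hx0, hx1, hxt⟩ := hsub hx
    apply ContinuousAt.continuousWithinAt
    apply ContinuousAt.log
    · exact ContinuousAt.div (by fun_prop) (by fun_prop) (by nlinarith)
    · have : (0:ℝ) < (x * (t*x)) / ((1-x)*(1-t*x)) := by
        apply div_pos (by positivity) (by nlinarith)
      exact ne_of_gt this
  have hφmem : φ ∈ Set.Icc (F a) (F b) := ⟨le_of_lt hFa, le_of_lt hFb⟩
  obtain ⟨x, hxab, hFx⟩ := intermediate_value_Icc (le_of_lt hab) hcont hφmem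
  refine ⟨x, ⟨hsub hxab, hFx⟩, ?_⟩
  rintro y ⟨hyS, hFy⟩
  rw [← hFdef y] at hFy
  by_contra hne
  rcases lt_or_gt_of_ne hne with h | h
  · have := hmono y hyS x (hsub hxab) h
    rw [hFy, hFx] at this; exact lt_irrefl _ this
  · have := hmono x (hsub hxab) y hyS h
    rw [hFy, hFx] at this; exact lt_irrefl _ this

/-- The map `(p₀, p₁) ↦ (log relative risk, log odds product)` is a bijection from
`(0,1) × (0,1)` onto `ℝ × ℝ`: for every `(θ, φ) ∈ ℝ²` there is a unique pair
`(p₀, p₁) ∈ (0,1)²` with `log(p₁/p₀) = θ` and `log(p₀p₁/((1−p₀)(1−p₁))) = φ`. -/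
theorem rr_logOddsProduct_bijection (θ φ : ℝ) :
    ∃! p : ℝ × ℝ, p.1 ∈ Set.Ioo (0:ℝ) 1 ∧ p.2 ∈ Set.Ioo (0:ℝ) 1 ∧
      Real.log (p.2 / p.1) = θ ∧
      Real.log ((p.1 * p.2) / ((1 - p.1) * (1 - p.2))) = φ := by
  set t : ℝ := Real.exp θ with hte
  have ht : 0 < t := Real.exp_pos θ
  obtain ⟨x, ⟨⟨hx0, hx1, hxt⟩, hFx⟩, huniq⟩ := rrlop_key t φ ht
  refine ⟨(x, t*x), ⟨⟨hx0, hx1⟩, ⟨by positivity, hxt⟩, ?_, hFx⟩, ?_⟩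
  · show Real.log (t*x/x) = θ
    rw [mul_div_assoc, div_self (ne_of_gt hx0), mul_one, hte, Real.log_exp]
  · rintro ⟨q₀, q₁⟩ ⟨⟨hq00, hq01⟩, ⟨hq10, hq11⟩, hθ, hφ⟩
    simp only at hq00 hq01 hq10 hq11 hθ hφ ⊢
    have hq1 : q₁ = t * q₀ := by
      have h1 : q₁ / q₀ = t := by
        rw [hte, ← hθ, Real.exp_log (div_pos hq10 hq00)]
      field_simp at h1
      linarith [h1]
    have hq0S : (0 < q₀ ∧ q₀ < 1 ∧ t*q₀ < 1) ∧
        Real.log ((q₀ * (t*q₀)) / ((1-q₀)*(1-t*q₀))) = φ := by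
      refine ⟨⟨hq00, hq01, hq1 ▸ hq11⟩, ?_⟩
      rw [← hq1]; exact hφ
    have := huniq q₀ hq0S
    rw [Prod.mk.injEq]
    exact ⟨this, by rw [hq1, this]⟩
end

section
/- The map sending a pair (p₀, p₁) ∈ (0,1) × (0,1) to (arctanh(p₁−p₀), log(p₀p₁/((1−p₀)(1−p₁)))) is a bijection from (0,1) × (0,1) onto ℝ × ℝ. In other words, for every (θ, φ) ∈ ℝ² there exists a unique pair (p₀, p₁) ∈ (0,1)² whose risk difference equals tanh(θ) and whose log odds product is φ. (Note p₁ − p₀ ∈ (−1,1), so arctanh(p₁−p₀) is well defined.) -/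
/-!
The risk difference `p₁ - p₀` ranges over `(-1, 1)`, where `arctanh` inverts `tanh`, and the log
odds product is `log (odds p₀ * odds p₁)`. So the claim is that for `d ∈ (-1, 1)` and `q > 0`
there is exactly one `p` with `p, p + d ∈ (0, 1)` and `odds p * odds (p + d) = q`. Uniqueness
holds because `odds` is positive and strictly increasing, so the product is strictly increasing
in `p`. For existence, clear denominators: `p (p + d) - q (1 - p) (1 - p - d)` is negative at the
left end of the admissible interval (where `p` or `p + d` vanishes) and positive at the right end
(where `1 - p` or `1 - p - d` vanishes), so it has a zero in between.
-/
/-- `arctanh x = (1/2) log((1+x)/(1−x))` for `x ∈ (−1,1)`. -/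
noncomputable def arctanh (x : ℝ) : ℝ := (1 / 2) * Real.log ((1 + x) / (1 - x))

open Set

theorem arctanh_eq_iff_eq_tanh {x θ : ℝ} (hx : x ∈ Ioo (-1) 1) :
    arctanh x = θ ↔ x = Real.tanh θ := by
  rw [arctanh, ← Real.artanh_eq_half_log (Ioo_subset_Icc_self hx)]
  constructor
  · rintro rfl
    exact (Real.tanh_artanh hx).symm
  · rintro rfl
    exact Real.artanh_tanh θ

noncomputable def odds (p : ℝ) : ℝ := p / (1 - p)

theorem odds_mul_odds (p₀ p₁ : ℝ) : odds p₀ * odds p₁ = p₀ * p₁ / ((1 - p₀) * (1 - p₁)) :=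
  div_mul_div_comm _ _ _ _

theorem odds_pos {p : ℝ} (hp : p ∈ Ioo 0 1) : 0 < odds p :=
  div_pos hp.1 (sub_pos.2 hp.2)

theorem strictMonoOn_odds : StrictMonoOn odds (Iio 1) := by
  intro x hx y hy hxy
  rw [mem_Iio] at hx hy
  rw [odds, odds, div_lt_div_iff₀ (sub_pos.2 hx) (sub_pos.2 hy)]
  nlinarith

theorem strictMonoOn_odds_mul_odds_add (d : ℝ) :
    StrictMonoOn (fun p => odds p * odds (p + d)) {p | p ∈ Ioo 0 1 ∧ p + d ∈ Ioo 0 1} := by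
  rintro x ⟨hx, hxd⟩ y ⟨hy, hyd⟩ hxy
  exact mul_lt_mul'' (strictMonoOn_odds hx.2 hy.2 hxy)
    (strictMonoOn_odds hxd.2 hyd.2 (add_lt_add_left hxy d)) (odds_pos hx).le (odds_pos hxd).le

theorem exists_odds_mul_odds_add_eq {d q : ℝ} (hd : d ∈ Ioo (-1) 1) (hq : 0 < q) :
    ∃ p ∈ Ioo (0 : ℝ) 1, p + d ∈ Ioo (0 : ℝ) 1 ∧ odds p * odds (p + d) = q := by
  set f : ℝ → ℝ := fun p => p * (p + d) - q * ((1 - p) * (1 - (p + d)))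
  set a := max 0 (-d)
  set b := min 1 (1 - d)
  have hab : a < b :=
    max_lt (lt_min one_pos (by linarith [hd.2])) (lt_min (by linarith [hd.1]) (by linarith))
  have ha : 0 ≤ a ∧ 0 ≤ a + d := ⟨le_max_left _ _, by linarith [le_max_right 0 (-d)]⟩
  have hb : b ≤ 1 ∧ b + d ≤ 1 := ⟨min_le_left _ _, by linarith [min_le_right 1 (1 - d)]⟩
  have hfa : f a < 0 := by
    have hleft : a * (a + d) = 0 := by rcases max_choice 0 (-d) with h | h <;> simp [a, h]
    have hcompl : 0 < (1 - a) * (1 - (a + d)) := mul_pos (by linarith) (by linarith)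
    simp only [f]
    nlinarith
  have hfb : 0 < f b := by
    have hright : (1 - b) * (1 - (b + d)) = 0 := by
      rcases min_choice 1 (1 - d) with h | h <;> simp [b, h]
    have hprod : 0 < b * (b + d) := mul_pos (by linarith) (by linarith)
    simp only [f]
    nlinarith
  obtain ⟨p, ⟨hap, hpb⟩, hfp⟩ :=
    intermediate_value_Ioo hab.le (by fun_prop : Continuous f).continuousOn ⟨hfa, hfb⟩
  have hp : p ∈ Ioo (0 : ℝ) 1 := ⟨by linarith, by linarith⟩
  have hpd : p + d ∈ Ioo (0 : ℝ) 1 := ⟨by linarith, by linarith⟩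
  refine ⟨p, hp, hpd, ?_⟩
  rw [odds_mul_odds, div_eq_iff (mul_pos (sub_pos.2 hp.2) (sub_pos.2 hpd.2)).ne']
  linarith [show f p = 0 from hfp]

theorem existsUnique_sub_eq_and_odds_mul_odds_eq {d q : ℝ} (hd : d ∈ Ioo (-1) 1) (hq : 0 < q) :
    ∃! p : ℝ × ℝ, p.1 ∈ Ioo 0 1 ∧ p.2 ∈ Ioo 0 1 ∧ p.2 - p.1 = d ∧ odds p.1 * odds p.2 = q := by
  obtain ⟨p, hp, hpd, hpq⟩ := exists_odds_mul_odds_add_eq hd hq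
  refine ⟨(p, p + d), ⟨hp, hpd, add_sub_cancel_left p d, hpq⟩, ?_⟩
  rintro ⟨x, y⟩ ⟨hx, hy, hxy, hxyq⟩
  obtain rfl : y = x + d := by linarith
  obtain rfl : x = p :=
    (strictMonoOn_odds_mul_odds_add d).injOn ⟨hx, hy⟩ ⟨hp, hpd⟩ (hxyq.trans hpq.symm)
  rfl

/-- The map `(p₀, p₁) ↦ (arctanh(risk difference), log odds product)` is a bijection from
`(0,1) × (0,1)` onto `ℝ × ℝ`: for every `(θ, φ) ∈ ℝ²` there is a unique pair
`(p₀, p₁) ∈ (0,1)²` with `arctanh(p₁ − p₀) = θ` and `log(p₀p₁/((1−p₀)(1−p₁))) = φ`. -/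
theorem rd_logOddsProduct_bijection (θ φ : ℝ) :
    ∃! p : ℝ × ℝ, p.1 ∈ Set.Ioo (0:ℝ) 1 ∧ p.2 ∈ Set.Ioo (0:ℝ) 1 ∧
      arctanh (p.2 - p.1) = θ ∧
      Real.log ((p.1 * p.2) / ((1 - p.1) * (1 - p.2))) = φ := by
  refine (existsUnique_congr fun p => ?_).2 (existsUnique_sub_eq_and_odds_mul_odds_eq
    ⟨Real.neg_one_lt_tanh θ, Real.tanh_lt_one θ⟩ (Real.exp_pos φ))
  refine and_congr_right fun h₀ => and_congr_right fun h₁ => and_congr ?_ ?_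
  · exact arctanh_eq_iff_eq_tanh ⟨by linarith [h₀.2, h₁.1], by linarith [h₀.1, h₁.2]⟩
  · rw [← odds_mul_odds]
    constructor
    · rintro rfl
      exact (Real.exp_log (mul_pos (odds_pos h₀) (odds_pos h₁))).symm
    · intro h
      rw [h, Real.log_exp]
end

section
/- Let θ, φ ∈ ℝ with φ ≠ 0, and define p = (−(e^θ+1)e^φ + √(e^{2φ}(e^θ+1)² + 4e^{θ+φ}(1−e^φ))) / (2e^θ(1−e^φ)). Then the quantity under the square root is nonnegative, 0 < p < 1, 0 < p·e^θ < 1, and log((p · p e^θ)/((1−p)(1−p e^θ))) = φ. That is, (p, p e^θ) is the inverse image of (θ, φ) under the map (p₀,p₁) ↦ (log(p₁/p₀), log odds product). -/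
/-!
With `a = e^θ` and `b = e^φ`, the displayed `p` is the root of
`a (1 - b) x² + b (1 + a) x - b = 0` chosen by the quadratic formula, and this equation says
exactly that `p · pa = b (1 - p)(1 - pa)`. Rationalizing the numerator rewrites `p` as
`2b / (s + (a + 1) b)`, where `s` is the square root of the discriminant
`b²(a + 1)² + 4ab(1 - b) = (a - 1)²b² + 4ab`; then `s > |a - 1| b` gives
`0 < p < 1` and `pa < 1` without splitting on the sign of `1 - b`.
-/

open Real

section QuadraticRoot

variable {a b s : ℝ}

theorem discr_eq_sq_add (a b : ℝ) :
    b ^ 2 * (a + 1) ^ 2 + 4 * (a * b) * (1 - b) = ((a - 1) * b) ^ 2 + 4 * a * b := by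
  ring

theorem discr_pos (ha : 0 < a) (hb : 0 < b) :
    0 < b ^ 2 * (a + 1) ^ 2 + 4 * (a * b) * (1 - b) := by
  rw [discr_eq_sq_add]
  positivity

theorem abs_sub_one_mul_lt_sqrt_discr (ha : 0 < a) (hb : 0 < b) :
    |a - 1| * b < √(b ^ 2 * (a + 1) ^ 2 + 4 * (a * b) * (1 - b)) := by
  rw [Real.lt_sqrt (by positivity), mul_pow, sq_abs, discr_eq_sq_add]
  nlinarith [mul_pos ha hb]

theorem root_formula_eq_two_mul_div (ha : a ≠ 0) (hb : b ≠ 1)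
    (hs : s ^ 2 = b ^ 2 * (a + 1) ^ 2 + 4 * (a * b) * (1 - b)) (ht : s + (a + 1) * b ≠ 0) :
    (-(a + 1) * b + s) / (2 * a * (1 - b)) = 2 * b / (s + (a + 1) * b) := by
  have hb' : 1 - b ≠ 0 := sub_ne_zero.2 hb.symm
  rw [div_eq_div_iff (by positivity) ht]
  linear_combination hs

theorem two_mul_div_add_odds_product
    (hs : s ^ 2 = b ^ 2 * (a + 1) ^ 2 + 4 * (a * b) * (1 - b)) (ht : s + (a + 1) * b ≠ 0) :
    2 * b / (s + (a + 1) * b) * (2 * b / (s + (a + 1) * b) * a) =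
      b * ((1 - 2 * b / (s + (a + 1) * b)) * (1 - 2 * b / (s + (a + 1) * b) * a)) := by
  -- otherwise `field_simp` normalizes the denominator to a form that `ht` no longer matches
  set t := s + (a + 1) * b
  field_simp
  linear_combination (-b) * hs

variable (ha : 0 < a) (hb : 0 < b) (hs_gt : |a - 1| * b < s)
include ha hb hs_gt

theorem add_add_one_mul_pos : 0 < s + (a + 1) * b := by
  nlinarith [abs_nonneg (a - 1), le_abs_self (a - 1)]

theorem two_mul_div_add_pos : 0 < 2 * b / (s + (a + 1) * b) :=
  div_pos (by positivity) (add_add_one_mul_pos ha hb hs_gt)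

theorem two_mul_div_add_lt_one : 2 * b / (s + (a + 1) * b) < 1 := by
  rw [div_lt_one (add_add_one_mul_pos ha hb hs_gt)]
  nlinarith [neg_abs_le (a - 1)]

theorem two_mul_div_add_mul_lt_one : 2 * b / (s + (a + 1) * b) * a < 1 := by
  rw [div_mul_eq_mul_div, div_lt_one (add_add_one_mul_pos ha hb hs_gt)]
  nlinarith [le_abs_self (a - 1)]

end QuadraticRoot

/-- The closed-form inverse map for the (log relative risk, log odds product)
parameterization: for `θ, φ ∈ ℝ` with `φ ≠ 0`, the displayed `p` satisfies
`0 < p < 1`, `0 < p·e^θ < 1`, the quantity under the square root is nonnegative,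
and the log odds product of `(p, p·e^θ)` equals `φ`. -/
theorem rr_inverse_map (θ φ : ℝ) (hφ : φ ≠ 0) :
    0 ≤ exp (2 * φ) * (exp θ + 1) ^ 2 + 4 * exp (θ + φ) * (1 - exp φ) ∧
    (let p : ℝ :=
      (-(exp θ + 1) * exp φ +
        Real.sqrt (exp (2 * φ) * (exp θ + 1) ^ 2 + 4 * exp (θ + φ) * (1 - exp φ))) /
      (2 * exp θ * (1 - exp φ));
     0 < p ∧ p < 1 ∧ 0 < p * exp θ ∧ p * exp θ < 1 ∧
       Real.log ((p * (p * exp θ)) / ((1 - p) * (1 - p * exp θ))) = φ) := by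
  have ha := exp_pos θ
  have hb := exp_pos φ
  have hb1 : exp φ ≠ 1 := fun h => hφ (exp_eq_one_iff φ |>.1 h)
  have hD : exp (2 * φ) * (exp θ + 1) ^ 2 + 4 * exp (θ + φ) * (1 - exp φ) =
      exp φ ^ 2 * (exp θ + 1) ^ 2 + 4 * (exp θ * exp φ) * (1 - exp φ) := by
    rw [two_mul, exp_add, exp_add]
    ring
  rw [hD]
  have hD_pos := discr_pos ha hb
  refine ⟨hD_pos.le, ?_⟩
  intro p
  have hs := sq_sqrt hD_pos.le
  have hs_gt := abs_sub_one_mul_lt_sqrt_discr ha hb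
  have ht := (add_add_one_mul_pos ha hb hs_gt).ne'
  have hp : p = _ := root_formula_eq_two_mul_div ha.ne' hb1 hs ht
  have hp_lt_one := two_mul_div_add_lt_one ha hb hs_gt
  have hpa_lt_one := two_mul_div_add_mul_lt_one ha hb hs_gt
  rw [hp]
  refine ⟨two_mul_div_add_pos ha hb hs_gt, hp_lt_one, by positivity, hpa_lt_one, ?_⟩
  rw [two_mul_div_add_odds_product hs ht,
    mul_div_cancel_right₀ _ (mul_pos (sub_pos.2 hp_lt_one) (sub_pos.2 hpa_lt_one)).ne', log_exp]
end

section
/- Let θ, φ ∈ ℝ with φ ≠ 0, set ρ = tanh(θ), and define p = (e^φ(2−ρ) + ρ − √((e^φ(ρ−2)−ρ)² + 4e^φ(1−ρ)(1−e^φ))) / (2(e^φ−1)). Then the quantity under the square root is nonnegative, 0 < p < 1, 0 < p + ρ < 1, and log((p(p+ρ))/((1−p)(1−p−ρ))) = φ. That is, (p, p+ρ) is the inverse image of (θ, φ) under the map (p₀,p₁) ↦ (arctanh(p₁−p₀), log odds product). -/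
open Real

private lemma rd_aux (ρ E s p : ℝ) (hρ1 : -1 < ρ) (hρ2 : ρ < 1) (hE0 : 0 < E)
    (hE1 : E ≠ 1) (hs0 : 0 ≤ s) (hs2 : s ^ 2 = ρ ^ 2 * (E - 1) ^ 2 + 4 * E)
    (hpa : p * (2 * (E - 1)) = E * (2 - ρ) + ρ - s) :
    0 < p ∧ p < 1 ∧ 0 < p + ρ ∧ p + ρ < 1 ∧
      p * (p + ρ) = E * ((1 - p) * (1 - p - ρ)) := by
  have ha : E - 1 ≠ 0 := sub_ne_zero.mpr hE1
  have hf : (E - 1) * p ^ 2 - (E * (2 - ρ) + ρ) * p + E * (1 - ρ) = 0 := by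
    have hsub : s = E * (2 - ρ) + ρ - 2 * (E - 1) * p := by linarith
    have h2 : (E * (2 - ρ) + ρ - 2 * (E - 1) * p) ^ 2 = ρ ^ 2 * (E - 1) ^ 2 + 4 * E := by
      rw [← hsub]; exact hs2
    have hquad : (E - 1) * ((E - 1) * p ^ 2 - (E * (2 - ρ) + ρ) * p + E * (1 - ρ)) = 0 := by
      linear_combination (1 / 4 : ℝ) * h2
    exact (mul_eq_zero.mp hquad).resolve_left ha
  have hbounds : 0 < p ∧ p < 1 ∧ 0 < p + ρ ∧ p + ρ < 1 := by
    rcases hE1.lt_or_gt with hlt | hgt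
    · -- E < 1
      have hE1' : 0 < 1 - E := by linarith
      have h1ρ : 0 < 1 + ρ := by linarith
      have h2ρ : 0 < 1 - ρ := by linarith
      have hp0 : 0 < p := by
        have h1 : (E * (2 - ρ) + ρ) ^ 2 < s ^ 2 := by
          nlinarith [mul_pos (mul_pos hE0 hE1') h2ρ]
        have h2 : E * (2 - ρ) + ρ < s := lt_of_pow_lt_pow_left₀ 2 hs0 h1
        have h3 : p * (2 * (E - 1)) < 0 := by linarith
        rcases mul_neg_iff.mp h3 with ⟨h4, h5⟩ | ⟨h4, h5⟩
        · exact h4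
        · linarith
      have hp2 : 0 < p + ρ := by
        have h1 : (2 * E + ρ * (E - 1)) ^ 2 < s ^ 2 := by
          nlinarith [mul_pos (mul_pos hE0 hE1') h1ρ]
        have h2 : 2 * E + ρ * (E - 1) < s := lt_of_pow_lt_pow_left₀ 2 hs0 h1
        have h3 : (p + ρ) * (2 * (E - 1)) < 0 := by linarith
        rcases mul_neg_iff.mp h3 with ⟨h4, h5⟩ | ⟨h4, h5⟩
        · exact h4
        · linarith
      have hp1 : p < 1 := by
        have hA : 0 ≤ 2 + ρ * (1 - E) := by nlinarith [mul_pos h1ρ hE1']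
        have h1 : s ^ 2 < (2 + ρ * (1 - E)) ^ 2 := by
          nlinarith [mul_pos hE1' h1ρ]
        have h2 : s < 2 + ρ * (1 - E) := lt_of_pow_lt_pow_left₀ 2 hA h1
        have h3 : (1 - p) * (2 * (E - 1)) < 0 := by linarith
        rcases mul_neg_iff.mp h3 with ⟨h4, h5⟩ | ⟨h4, h5⟩
        · linarith
        · linarith
      have hp3 : p + ρ < 1 := by
        have hA : 0 ≤ 2 + ρ * (E - 1) := by nlinarith [mul_pos h2ρ hE1']
        have h1 : s ^ 2 < (2 + ρ * (E - 1)) ^ 2 := by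
          nlinarith [mul_pos hE1' h2ρ]
        have h2 : s < 2 + ρ * (E - 1) := lt_of_pow_lt_pow_left₀ 2 hA h1
        have h3 : (1 - p - ρ) * (2 * (E - 1)) < 0 := by linarith
        rcases mul_neg_iff.mp h3 with ⟨h4, h5⟩ | ⟨h4, h5⟩
        · linarith
        · linarith
      exact ⟨hp0, hp1, hp2, hp3⟩
    · -- 1 < E
      have hE1' : 0 < E - 1 := by linarith
      have h1ρ : 0 < 1 + ρ := by linarith
      have h2ρ : 0 < 1 - ρ := by linarith
      have hp0 : 0 < p := by
        have hA : 0 ≤ E * (2 - ρ) + ρ := by nlinarith [mul_pos hE0 h2ρ]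
        have h1 : s ^ 2 < (E * (2 - ρ) + ρ) ^ 2 := by
          nlinarith [mul_pos (mul_pos hE0 hE1') h2ρ]
        have h2 : s < E * (2 - ρ) + ρ := lt_of_pow_lt_pow_left₀ 2 hA h1
        have h3 : 0 < p * (2 * (E - 1)) := by linarith
        rcases mul_pos_iff.mp h3 with ⟨h4, h5⟩ | ⟨h4, h5⟩
        · exact h4
        · linarith
      have hp2 : 0 < p + ρ := by
        have hA : 0 ≤ 2 * E + ρ * (E - 1) := by nlinarith [mul_pos h1ρ hE1']
        have h1 : s ^ 2 < (2 * E + ρ * (E - 1)) ^ 2 := by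
          nlinarith [mul_pos (mul_pos hE0 hE1') h1ρ]
        have h2 : s < 2 * E + ρ * (E - 1) := lt_of_pow_lt_pow_left₀ 2 hA h1
        have h3 : 0 < (p + ρ) * (2 * (E - 1)) := by linarith
        rcases mul_pos_iff.mp h3 with ⟨h4, h5⟩ | ⟨h4, h5⟩
        · exact h4
        · linarith
      have hp1 : p < 1 := by
        have h1 : (2 + ρ * (1 - E)) ^ 2 < s ^ 2 := by
          nlinarith [mul_pos hE1' h1ρ]
        have h2 : 2 + ρ * (1 - E) < s := lt_of_pow_lt_pow_left₀ 2 hs0 h1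
        have h3 : 0 < (1 - p) * (2 * (E - 1)) := by linarith
        rcases mul_pos_iff.mp h3 with ⟨h4, h5⟩ | ⟨h4, h5⟩
        · linarith
        · linarith
      have hp3 : p + ρ < 1 := by
        have h1 : (2 + ρ * (E - 1)) ^ 2 < s ^ 2 := by
          nlinarith [mul_pos hE1' h2ρ]
        have h2 : 2 + ρ * (E - 1) < s := lt_of_pow_lt_pow_left₀ 2 hs0 h1
        have h3 : 0 < (1 - p - ρ) * (2 * (E - 1)) := by linarith
        rcases mul_pos_iff.mp h3 with ⟨h4, h5⟩ | ⟨h4, h5⟩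
        · linarith
        · linarith
      exact ⟨hp0, hp1, hp2, hp3⟩
  exact ⟨hbounds.1, hbounds.2.1, hbounds.2.2.1, hbounds.2.2.2, by linear_combination -hf⟩

/-- The closed-form inverse map for the (arctanh risk difference, log odds product)
parameterization: for `θ, φ ∈ ℝ` with `φ ≠ 0` and `ρ = tanh θ`, the displayed `p`
satisfies `0 < p < 1`, `0 < p + ρ < 1`, the quantity under the square root is
nonnegative, and the log odds product of `(p, p + ρ)` equals `φ`. -/
theorem rd_inverse_map (θ φ : ℝ) (hφ : φ ≠ 0) :
    (let ρ : ℝ := tanh θ;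
     0 ≤ (exp φ * (ρ - 2) - ρ) ^ 2 + 4 * exp φ * (1 - ρ) * (1 - exp φ) ∧
     (let p : ℝ :=
        (exp φ * (2 - ρ) + ρ -
          Real.sqrt ((exp φ * (ρ - 2) - ρ) ^ 2 + 4 * exp φ * (1 - ρ) * (1 - exp φ))) /
        (2 * (exp φ - 1));
      0 < p ∧ p < 1 ∧ 0 < p + ρ ∧ p + ρ < 1 ∧
        Real.log ((p * (p + ρ)) / ((1 - p) * (1 - p - ρ))) = φ)) := by
  have hρ2 : tanh θ < 1 := by
    rw [Real.tanh_eq_sinh_div_cosh, div_lt_one (Real.cosh_pos θ)]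
    nlinarith [Real.cosh_sub_sinh θ, Real.exp_pos (-θ)]
  have hρ1 : -1 < tanh θ := by
    rw [Real.tanh_eq_sinh_div_cosh, lt_div_iff₀ (Real.cosh_pos θ)]
    nlinarith [Real.cosh_add_sinh θ, Real.exp_pos θ]
  set ρ := tanh θ with hρdef
  have hE0 : 0 < exp φ := Real.exp_pos φ
  have hE1 : exp φ ≠ 1 := by rw [Ne, Real.exp_eq_one_iff]; exact hφ
  have ha : exp φ - 1 ≠ 0 := sub_ne_zero.mpr hE1
  have hD : (exp φ * (ρ - 2) - ρ) ^ 2 + 4 * exp φ * (1 - ρ) * (1 - exp φ)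
      = ρ ^ 2 * (exp φ - 1) ^ 2 + 4 * exp φ := by ring
  have hDpos : 0 ≤ (exp φ * (ρ - 2) - ρ) ^ 2 + 4 * exp φ * (1 - ρ) * (1 - exp φ) := by
    rw [hD]; positivity
  refine ⟨hDpos, ?_⟩
  set s := Real.sqrt ((exp φ * (ρ - 2) - ρ) ^ 2 + 4 * exp φ * (1 - ρ) * (1 - exp φ))
    with hsdef
  have hs2 : s ^ 2 = ρ ^ 2 * (exp φ - 1) ^ 2 + 4 * exp φ := by
    rw [hsdef, Real.sq_sqrt hDpos, hD]
  have hs0 : 0 ≤ s := Real.sqrt_nonneg _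
  set p := (exp φ * (2 - ρ) + ρ - s) / (2 * (exp φ - 1)) with hpdef
  have hpa : p * (2 * (exp φ - 1)) = exp φ * (2 - ρ) + ρ - s := by
    rw [hpdef]; field_simp
  obtain ⟨h1, h2, h3, h4, h5⟩ :=
    rd_aux ρ (exp φ) s p hρ1 hρ2 hE0 hE1 hs0 hs2 hpa
  refine ⟨h1, h2, h3, h4, ?_⟩
  have hden : (1 - p) * (1 - p - ρ) ≠ 0 := (mul_pos (by linarith) (by linarith)).ne'
  rw [show (p * (p + ρ)) / ((1 - p) * (1 - p - ρ)) = exp φ from by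
    rw [div_eq_iff hden]; linarith [h5], Real.log_exp]
end

section
/- Fix θ ∈ ℝ and let U = min(1, e^{−θ}). The function f(p) = log((p · p e^θ)/((1−p)(1−p e^θ))), defined for p ∈ (0, U), is strictly increasing on (0, U), tends to −∞ as p → 0⁺ and to +∞ as p → U⁻, and maps (0, U) bijectively onto ℝ. Consequently, every contour of constant log odds product meets every line of constant relative risk in the open unit square in exactly one point. -/
open Real Filter Set

/-- For fixed `θ`, the log odds product `f(p) = log((p · p e^θ)/((1−p)(1−p e^θ)))`
along the line of constant relative risk `e^θ`, defined for `p ∈ (0, U)` with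
`U = min 1 e^{−θ}`, is strictly increasing, tends to `−∞` at `0⁺` and `+∞` at `U⁻`,
and maps `(0, U)` bijectively onto `ℝ`. -/
theorem logOddsProduct_strictMono_on_rr_line (θ : ℝ) :
    let U : ℝ := min 1 (exp (-θ))
    let f : ℝ → ℝ := fun p => Real.log ((p * (p * exp θ)) / ((1 - p) * (1 - p * exp θ)))
    StrictMonoOn f (Ioo 0 U) ∧
    Tendsto f (nhdsWithin 0 (Ioi 0)) atBot ∧
    Tendsto f (nhdsWithin U (Iio U)) atTop ∧
    Set.BijOn f (Ioo 0 U) Set.univ := by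
  intro U f
  have hE : (0:ℝ) < exp θ := exp_pos θ
  have hU0 : (0:ℝ) < U := lt_min one_pos (exp_pos _)
  have hU1 : U ≤ 1 := min_le_left _ _
  have hUE : U * exp θ ≤ 1 := by
    have : U ≤ exp (-θ) := min_le_right _ _
    calc U * exp θ ≤ exp (-θ) * exp θ := by nlinarith [exp_pos θ]
    _ = 1 := by rw [← exp_add]; simp
  -- positivity of numerator and denominator on the interval
  have hnum : ∀ p ∈ Ioo (0:ℝ) U, 0 < p * (p * exp θ) := by
    intro p hp; have := hp.1; positivity
  have hden : ∀ p ∈ Ioo (0:ℝ) U, 0 < (1 - p) * (1 - p * exp θ) := by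
    intro p hp
    have h1 : p < 1 := lt_of_lt_of_le hp.2 hU1
    have h2 : p * exp θ < 1 := lt_of_lt_of_le (by nlinarith [hp.2]) hUE
    nlinarith
  have hratio_pos : ∀ p ∈ Ioo (0:ℝ) U, 0 < (p * (p * exp θ)) / ((1 - p) * (1 - p * exp θ)) := by
    intro p hp; exact div_pos (hnum p hp) (hden p hp)
  -- strict monotonicity
  have hmono : StrictMonoOn f (Ioo 0 U) := by
    intro a ha b hb hab
    apply Real.log_lt_log (hratio_pos a ha)
    have h1a : a < 1 := lt_of_lt_of_le ha.2 hU1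
    have h2a : a * exp θ < 1 := lt_of_lt_of_le (by nlinarith [ha.2]) hUE
    have h1b : b < 1 := lt_of_lt_of_le hb.2 hU1
    have h2b : b * exp θ < 1 := lt_of_lt_of_le (by nlinarith [hb.2]) hUE
    have hdb : (0:ℝ) < (1 - b) * (1 - b * exp θ) := hden b hb
    have hda : (0:ℝ) < (1 - a) * (1 - a * exp θ) := hden a ha
    rw [div_lt_div_iff₀ hda hdb]
    have hnn : a * (a * exp θ) < b * (b * exp θ) := by nlinarith [mul_pos (mul_pos (sub_pos.2 hab) (show (0:ℝ) < a + b by linarith [ha.1])) hE]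
    have hdd : (1 - b) * (1 - b * exp θ) < (1 - a) * (1 - a * exp θ) := by
      nlinarith [mul_pos (sub_pos.2 hab) (show (0:ℝ) < (1 - a * exp θ) + exp θ * (1 - b) by nlinarith)]
    calc a * (a * exp θ) * ((1 - b) * (1 - b * exp θ))
        < b * (b * exp θ) * ((1 - b) * (1 - b * exp θ)) := mul_lt_mul_of_pos_right hnn hdb
      _ < b * (b * exp θ) * ((1 - a) * (1 - a * exp θ)) :=
          mul_lt_mul_of_pos_left hdd (hnum b hb)
  have hbot' : Tendsto f (nhdsWithin 0 (Ioi 0)) atBot := by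
    have hev : ∀ᶠ p in nhdsWithin (0:ℝ) (Ioi 0), p ∈ Ioo (0:ℝ) U := by
      filter_upwards [Ioo_mem_nhdsGT_of_mem (left_mem_Ico.2 hU0)] with p hp using hp
    have hr : Tendsto (fun p => (p * (p * exp θ)) / ((1 - p) * (1 - p * exp θ)))
        (nhdsWithin 0 (Ioi 0)) (nhdsWithin 0 (Ioi 0)) := by
      apply tendsto_nhdsWithin_of_tendsto_nhds_of_eventually_within
      · have : Tendsto (fun p : ℝ => (p * (p * exp θ)) / ((1 - p) * (1 - p * exp θ)))
            (nhds 0) (nhds ((0 * (0 * exp θ)) / ((1 - 0) * (1 - 0 * exp θ)))) := by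
          apply Tendsto.div
          · exact (continuous_id.mul (continuous_id.mul continuous_const)).tendsto 0
          · exact ((continuous_const.sub continuous_id).mul
              (continuous_const.sub (continuous_id.mul continuous_const))).tendsto 0
          · norm_num
        simpa using this.mono_left nhdsWithin_le_nhds
      · filter_upwards [hev] with p hp using hratio_pos p hp
    exact Real.tendsto_log_nhdsGT_zero.comp hr
  have htop' : Tendsto f (nhdsWithin U (Iio U)) atTop := by
    have hnumU : Tendsto (fun p : ℝ => p * (p * exp θ)) (nhdsWithin U (Iio U))
        (nhds (U * (U * exp θ))) :=
      ((continuous_id.mul (continuous_id.mul continuous_const)).tendsto U).mono_left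
        nhdsWithin_le_nhds
    have hdenU : Tendsto (fun p : ℝ => ((1 - p) * (1 - p * exp θ))⁻¹) (nhdsWithin U (Iio U))
        atTop := by
      apply tendsto_inv_nhdsGT_zero.comp
      apply tendsto_nhdsWithin_of_tendsto_nhds_of_eventually_within
      · have hc : Tendsto (fun p : ℝ => (1 - p) * (1 - p * exp θ)) (nhds U)
            (nhds ((1 - U) * (1 - U * exp θ))) :=
          ((continuous_const.sub continuous_id).mul
            (continuous_const.sub (continuous_id.mul continuous_const))).tendsto U
        have hUz : (1 - U) * (1 - U * exp θ) = 0 := by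
          rcases min_cases (1:ℝ) (exp (-θ)) with ⟨h, _⟩ | ⟨h, _⟩
          · show (1 - U) * (1 - U * exp θ) = 0
            rw [show U = 1 from h]; ring
          · show (1 - U) * (1 - U * exp θ) = 0
            rw [show U = exp (-θ) from h, ← exp_add]; simp
        rw [hUz] at hc
        exact hc.mono_left nhdsWithin_le_nhds
      · filter_upwards [self_mem_nhdsWithin] with p (hp : p < U)
        have h1 : p < 1 := lt_of_lt_of_le hp hU1
        have h2 : p * exp θ < 1 := by
          rcases le_or_gt p 0 with h | h
          · nlinarith
          · exact lt_of_lt_of_le (by nlinarith) hUE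
        have : (0:ℝ) < (1 - p) * (1 - p * exp θ) := by nlinarith
        exact this
    have hmul : Tendsto (fun p : ℝ => (p * (p * exp θ)) * ((1 - p) * (1 - p * exp θ))⁻¹)
        (nhdsWithin U (Iio U)) atTop :=
      Filter.Tendsto.pos_mul_atTop (by positivity) hnumU hdenU
    have : Tendsto (fun p : ℝ => (p * (p * exp θ)) / ((1 - p) * (1 - p * exp θ)))
        (nhdsWithin U (Iio U)) atTop := by
      simpa [div_eq_mul_inv] using hmul
    exact Real.tendsto_log_atTop.comp this
  refine ⟨hmono, hbot', htop', ?_⟩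
  refine ⟨fun x _ => mem_univ _, hmono.injOn, fun y _ => ?_⟩
  have heva : ∀ᶠ p in nhdsWithin (0:ℝ) (Ioi 0), p ∈ Ioo (0:ℝ) U := by
    filter_upwards [Ioo_mem_nhdsGT_of_mem (left_mem_Ico.2 hU0)] with p hp using hp
  have hevb : ∀ᶠ p in nhdsWithin U (Iio U), p ∈ Ioo (0:ℝ) U := by
    filter_upwards [Ioo_mem_nhdsLT_of_mem (right_mem_Ioc.2 hU0)] with p hp using hp
  obtain ⟨a, hfa, ha⟩ := ((hbot'.eventually (eventually_lt_atBot y)).and heva).exists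
  obtain ⟨b, hfb, hb⟩ := ((htop'.eventually (eventually_gt_atTop y)).and hevb).exists
  have hab : a < b := by
    by_contra h
    push_neg at h
    rcases lt_or_eq_of_le h with h | h
    · exact absurd (hmono hb ha h) (by linarith)
    · rw [h] at hfb; linarith
  have hsub : Icc a b ⊆ Ioo 0 U := fun x hx =>
    ⟨lt_of_lt_of_le ha.1 hx.1, lt_of_le_of_lt hx.2 hb.2⟩
  have hcont : ContinuousOn f (Icc a b) := by
    apply ContinuousOn.log
    · apply ContinuousOn.div
      · exact (continuous_id.mul (continuous_id.mul continuous_const)).continuousOn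
      · exact ((continuous_const.sub continuous_id).mul
          (continuous_const.sub (continuous_id.mul continuous_const))).continuousOn
      · exact fun x hx => (hden x (hsub hx)).ne'
    · exact fun x hx => (hratio_pos x (hsub hx)).ne'
  obtain ⟨c, hc, hfc⟩ := intermediate_value_Icc hab.le hcont
    (⟨hfa.le, hfb.le⟩ : y ∈ Icc (f a) (f b))
  exact ⟨c, hsub hc, hfc⟩
end

section
/- Fix ρ ∈ (−1,1) and let L = max(0, −ρ) and U = min(1, 1−ρ). The function f(p) = log((p(p+ρ))/((1−p)(1−p−ρ))), defined for p ∈ (L, U), is strictly increasing on (L, U), tends to −∞ as p → L⁺ and to +∞ as p → U⁻, and maps (L, U) bijectively onto ℝ. Consequently, every contour of constant log odds product meets every line of constant risk difference in the open unit square in exactly one point. -/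
open Real Filter Set Topology

/-- For fixed risk difference `ρ ∈ (−1,1)`, the log odds product
`f(p) = log((p(p+ρ))/((1−p)(1−p−ρ)))` along the line of constant risk difference,
defined for `p ∈ (L, U)` with `L = max 0 (−ρ)` and `U = min 1 (1−ρ)`, is strictly
increasing, tends to `−∞` at `L⁺` and `+∞` at `U⁻`, and maps `(L, U)` bijectively
onto `ℝ`. -/
theorem logOddsProduct_strictMono_on_rd_line (ρ : ℝ) (hρ : ρ ∈ Ioo (-1 : ℝ) 1) :
    let L : ℝ := max 0 (-ρ)
    let U : ℝ := min 1 (1 - ρ)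
    let f : ℝ → ℝ := fun p => Real.log ((p * (p + ρ)) / ((1 - p) * (1 - p - ρ)))
    StrictMonoOn f (Ioo L U) ∧
    Tendsto f (nhdsWithin L (Ioi L)) atBot ∧
    Tendsto f (nhdsWithin U (Iio U)) atTop ∧
    Set.BijOn f (Ioo L U) Set.univ := by
  obtain ⟨hρ1, hρ2⟩ := hρ
  intro L U f
  have hL0 : 0 ≤ L := le_max_left _ _
  have hLρ : -ρ ≤ L := le_max_right _ _
  have hU1 : U ≤ 1 := min_le_left _ _
  have hUρ : U ≤ 1 - ρ := min_le_right _ _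
  have hLU : L < U := by
    rcases le_total 0 ρ with h | h
    · have hLe : L = 0 := max_eq_left (by linarith)
      rw [hLe]; exact lt_min (by norm_num) (by linarith)
    · have hLe : L = -ρ := max_eq_right (by linarith)
      rw [hLe]; exact lt_min (by linarith) (by linarith)
  have hpos : ∀ p ∈ Ioo L U, 0 < p ∧ 0 < p + ρ ∧ 0 < 1 - p ∧ 0 < 1 - p - ρ := by
    intro p hp
    obtain ⟨h1, h2⟩ := hp
    exact ⟨by linarith, by linarith, by linarith, by linarith⟩
  have hRpos : ∀ p ∈ Ioo L U, 0 < (p * (p + ρ)) / ((1 - p) * (1 - p - ρ)) := by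
    intro p hp
    obtain ⟨h1, h2, h3, h4⟩ := hpos p hp
    positivity
  -- strict monotonicity
  have hmono : StrictMonoOn f (Ioo L U) := by
    intro a ha b hb hab
    obtain ⟨ha1, ha2, ha3, ha4⟩ := hpos a ha
    obtain ⟨hb1, hb2, hb3, hb4⟩ := hpos b hb
    apply Real.log_lt_log (hRpos a ha)
    rw [div_lt_div_iff₀ (by positivity) (by positivity)]
    have hN : a * (a + ρ) < b * (b + ρ) := by nlinarith
    have hD : (1 - b) * (1 - b - ρ) < (1 - a) * (1 - a - ρ) := by nlinarith
    calc a * (a + ρ) * ((1 - b) * (1 - b - ρ))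
        < b * (b + ρ) * ((1 - b) * (1 - b - ρ)) := by
          exact mul_lt_mul_of_pos_right hN (by positivity)
      _ < b * (b + ρ) * ((1 - a) * (1 - a - ρ)) := by
          exact mul_lt_mul_of_pos_left hD (by positivity)
  -- continuity
  have hcont : ContinuousOn f (Ioo L U) := by
    apply ContinuousOn.log
    · apply ContinuousOn.div (by fun_prop) (by fun_prop)
      intro p hp
      obtain ⟨h1, h2, h3, h4⟩ := hpos p hp
      exact (mul_pos h3 h4).ne'
    · intro p hp
      exact (hRpos p hp).ne'
  -- limit at L⁺
  have hDl : 0 < (1 - L) * (1 - L - ρ) := by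
    apply mul_pos <;> linarith
  have hnum0 : L * (L + ρ) = 0 := by
    rcases le_total 0 ρ with h | h
    · have hLe : L = 0 := max_eq_left (by linarith)
      rw [hLe]; ring
    · have hLe : L = -ρ := max_eq_right (by linarith)
      rw [hLe]; ring
  have hratL0 : Tendsto (fun p => (p * (p + ρ)) / ((1 - p) * (1 - p - ρ))) (𝓝 L) (𝓝 0) := by
    have hc : ContinuousAt (fun p => (p * (p + ρ)) / ((1 - p) * (1 - p - ρ))) L :=
      ContinuousAt.div (by fun_prop) (by fun_prop) hDl.ne'
    have := hc.tendsto
    simpa [hnum0] using this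
  have hratL : Tendsto (fun p => (p * (p + ρ)) / ((1 - p) * (1 - p - ρ)))
      (nhdsWithin L (Ioi L)) (nhdsWithin 0 (Ioi 0)) := by
    apply tendsto_nhdsWithin_of_tendsto_nhds_of_eventually_within
    · exact hratL0.mono_left nhdsWithin_le_nhds
    · filter_upwards [Ioo_mem_nhdsGT_of_mem ⟨le_refl L, hLU⟩] with p hp
      exact hRpos p hp
  have htendL : Tendsto f (nhdsWithin L (Ioi L)) atBot :=
    Real.tendsto_log_nhdsGT_zero.comp hratL
  -- limit at U⁻
  have hNu : 0 < U * (U + ρ) := by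
    apply mul_pos <;> linarith
  have hden0 : (1 - U) * (1 - U - ρ) = 0 := by
    rcases le_total 0 ρ with h | h
    · have hUe : U = 1 - ρ := min_eq_right (by linarith)
      rw [hUe]; ring
    · have hUe : U = 1 := min_eq_left (by linarith)
      rw [hUe]; ring
  have hdenU0 : Tendsto (fun p => (1 - p) * (1 - p - ρ)) (𝓝 U) (𝓝 0) := by
    have hc : Continuous (fun p : ℝ => (1 - p) * (1 - p - ρ)) := by fun_prop
    simpa [hden0] using hc.tendsto U
  have hdenU : Tendsto (fun p => (1 - p) * (1 - p - ρ))
      (nhdsWithin U (Iio U)) (nhdsWithin 0 (Ioi 0)) := by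
    apply tendsto_nhdsWithin_of_tendsto_nhds_of_eventually_within
    · exact hdenU0.mono_left nhdsWithin_le_nhds
    · filter_upwards [Ioo_mem_nhdsLT_of_mem ⟨hLU, le_refl U⟩] with p hp
      obtain ⟨h1, h2, h3, h4⟩ := hpos p hp
      exact mul_pos h3 h4
  have hinv : Tendsto (fun p => ((1 - p) * (1 - p - ρ))⁻¹) (nhdsWithin U (Iio U)) atTop :=
    tendsto_inv_nhdsGT_zero.comp hdenU
  have hnumU : Tendsto (fun p => p * (p + ρ)) (nhdsWithin U (Iio U)) (𝓝 (U * (U + ρ))) := by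
    have hc : Continuous (fun p : ℝ => p * (p + ρ)) := by fun_prop
    exact (hc.tendsto U).mono_left nhdsWithin_le_nhds
  have hdiv : Tendsto (fun p => (p * (p + ρ)) / ((1 - p) * (1 - p - ρ)))
      (nhdsWithin U (Iio U)) atTop := by
    simp only [div_eq_mul_inv]
    exact hnumU.pos_mul_atTop hNu hinv
  have htendU : Tendsto f (nhdsWithin U (Iio U)) atTop :=
    Real.tendsto_log_atTop.comp hdiv
  refine ⟨hmono, htendL, htendU, ?_, hmono.injOn, ?_⟩
  · exact fun x _ => mem_univ _
  · intro y _
    obtain ⟨a, hfa, ha⟩ :=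
      ((htendL.eventually (eventually_lt_atBot y)).and
        (Filter.eventually_of_mem (Ioo_mem_nhdsGT_of_mem ⟨le_refl L, hLU⟩)
          (fun p hp => hp))).exists
    obtain ⟨b, hfb, hb⟩ :=
      ((htendU.eventually (eventually_gt_atTop y)).and
        (Filter.eventually_of_mem (Ioo_mem_nhdsLT_of_mem ⟨hLU, le_refl U⟩)
          (fun p hp => hp))).exists
    have hsub : uIcc a b ⊆ Ioo L U := (ordConnected_Ioo).uIcc_subset ha hb
    have hy : y ∈ uIcc (f a) (f b) :=
      Icc_subset_uIcc ⟨le_of_lt hfa, le_of_lt hfb⟩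
    obtain ⟨c, hc, hfc⟩ := intermediate_value_uIcc (hcont.mono hsub) hy
    exact ⟨c, hsub hc, hfc⟩
end

section
/- (Double robustness of the relative-risk estimating function.) Let e, p₀ ∈ (0,1), θ ∈ ℝ with p₁ = p₀e^θ ∈ (0,1), and let e*, p* ∈ ℝ be 'working' values. If e* = e or p* = p₀, then under the joint distribution P(A=a, Y=y) = e^a(1−e)^{1−a} p_a^y(1−p_a)^{1−y} on {0,1}², the estimating function is unbiased: E[(A − e*)·(Y·e^{−Aθ} − p*)] = 0. -/
open Real Finset

/-- Double robustness of the relative-risk estimating function: with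
`P(A=1)=e`, `P(Y=1|A=a)=p_a`, `p₁ = p₀ e^θ`, and working values `e*, p*`, if
`e* = e` or `p* = p₀` then `E[(A − e*)(Y e^{−Aθ} − p*)] = 0`. -/
theorem rr_doubly_robust (e p₀ θ estar pstar : ℝ) (he : e ∈ Set.Ioo (0:ℝ) 1)
    (hp₀ : p₀ ∈ Set.Ioo (0:ℝ) 1) (hp₁ : p₀ * exp θ ∈ Set.Ioo (0:ℝ) 1)
    (hdr : estar = e ∨ pstar = p₀) :
    let p : ℕ → ℝ := fun a => if a = 0 then p₀ else p₀ * exp θ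
    let P : ℕ → ℕ → ℝ := fun a y =>
      e ^ a * (1 - e) ^ (1 - a) * (p a) ^ y * (1 - p a) ^ (1 - y)
    (∑ a ∈ range 2, ∑ y ∈ range 2,
        P a y * (((a : ℝ) - estar) * ((y : ℝ) * exp (-(a : ℝ) * θ) - pstar))) = 0 := by
  intro p P
  have hexp : exp (-(1:ℝ) * θ) * exp θ = 1 := by
    rw [← Real.exp_add]; norm_num
  simp only [P, p, Finset.sum_range_succ, Finset.sum_range_zero]
  have hexp0 : exp (-(0:ℝ) * θ) = 1 := by norm_num
  rcases hdr with h | h <;> subst h <;> push_cast <;> rw [hexp0]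
  · linear_combination estar * (1 - estar) * p₀ * hexp
  · linear_combination e * (1 - estar) * pstar * hexp
end

section
/- (Double robustness of the risk-difference estimating function.) Let e, p₀ ∈ (0,1), θ ∈ ℝ with p₁ = p₀ + tanh(θ) ∈ (0,1), and let e*, p* ∈ ℝ be 'working' values. If e* = e or p* = p₀, then under the joint distribution P(A=a, Y=y) = e^a(1−e)^{1−a} p_a^y(1−p_a)^{1−y} on {0,1}², the estimating function is unbiased: E[(A − e*)·(Y − A·tanh(θ) − p*)] = 0. -/
open Real Finset

/-- Double robustness of the risk-difference estimating function: with
`P(A=1)=e`, `P(Y=1|A=a)=p_a`, `p₁ = p₀ + tanh θ`, and working values `e*, p*`, if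
`e* = e` or `p* = p₀` then `E[(A − e*)(Y − A·tanh θ − p*)] = 0`. -/
theorem rd_doubly_robust (e p₀ θ estar pstar : ℝ) (he : e ∈ Set.Ioo (0:ℝ) 1)
    (hp₀ : p₀ ∈ Set.Ioo (0:ℝ) 1) (hp₁ : p₀ + tanh θ ∈ Set.Ioo (0:ℝ) 1)
    (hdr : estar = e ∨ pstar = p₀) :
    let p : ℕ → ℝ := fun a => if a = 0 then p₀ else p₀ + tanh θ
    let P : ℕ → ℕ → ℝ := fun a y =>
      e ^ a * (1 - e) ^ (1 - a) * (p a) ^ y * (1 - p a) ^ (1 - y)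
    (∑ a ∈ range 2, ∑ y ∈ range 2,
        P a y * (((a : ℝ) - estar) * ((y : ℝ) - (a : ℝ) * tanh θ - pstar))) = 0 := by
  intro p P
  rcases hdr with h | h <;> subst h <;>
    simp only [Finset.sum_range_succ, Finset.sum_range_zero, P, p] <;> norm_num <;> ring
end

section
/- (Existence and uniqueness of the solution to the relative-risk estimating equation.) Let e, p₀, p₁, e*, p* ∈ (0,1) and suppose e* = e or p* = p₀. Define g(θ) = (1−e)(−e*)(p₀ − p*) + e(1−e*)(p₁e^{−θ} − p*) for θ ∈ ℝ (this is E[(A−e*)(Y e^{−Aθ} − p*)] under the distribution with P(A=1)=e, P(Y=1|A=a)=p_a). Then g is strictly decreasing on ℝ, g(θ) → +∞ as θ → −∞, the limit of g(θ) as θ → +∞ is strictly negative, and g has a unique zero, which equals log(p₁/p₀). -/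
open Real Filter

/-- Existence and uniqueness of the solution to the relative-risk estimating
equation: the population estimating function
`g(θ) = (1−e)(−e*)(p₀ − p*) + e(1−e*)(p₁e^{−θ} − p*)` is strictly decreasing,
tends to `+∞` as `θ → −∞`, has a strictly negative limit as `θ → +∞`, and its
unique zero is `log(p₁/p₀)`, provided `e* = e` or `p* = p₀`. -/
theorem rr_estimating_equation_unique_root (e p₀ p₁ estar pstar : ℝ)
    (he : e ∈ Set.Ioo (0:ℝ) 1) (hp₀ : p₀ ∈ Set.Ioo (0:ℝ) 1)
    (hp₁ : p₁ ∈ Set.Ioo (0:ℝ) 1) (hestar : estar ∈ Set.Ioo (0:ℝ) 1)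
    (hpstar : pstar ∈ Set.Ioo (0:ℝ) 1) (hdr : estar = e ∨ pstar = p₀) :
    let g : ℝ → ℝ := fun θ =>
      (1 - e) * (-estar) * (p₀ - pstar) + e * (1 - estar) * (p₁ * exp (-θ) - pstar)
    StrictAnti g ∧
    Tendsto g atBot atTop ∧
    (Tendsto g atTop
        (nhds ((1 - e) * (-estar) * (p₀ - pstar) + e * (1 - estar) * (0 - pstar))) ∧
      (1 - e) * (-estar) * (p₀ - pstar) + e * (1 - estar) * (0 - pstar) < 0) ∧
    ∀ θ : ℝ, g θ = 0 ↔ θ = Real.log (p₁ / p₀) := by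
  intro g
  have hK : 0 < e * (1 - estar) := mul_pos he.1 (by linarith [hestar.2])
  have hkey : ∀ θ : ℝ, g θ = e * (1 - estar) * (p₁ * exp (-θ) - p₀) := by
    intro θ
    rcases hdr with h | h <;> subst h <;> simp only [g] <;> ring
  refine ⟨?_, ?_, ⟨?_, ?_⟩, ?_⟩
  · intro a b hab
    simp only [g]
    have : exp (-b) < exp (-a) := exp_lt_exp.mpr (by linarith)
    nlinarith [mul_pos (mul_pos hK hp₁.1) (sub_pos.mpr this)]
  · have h1 : Tendsto (fun θ : ℝ => exp (-θ)) atBot atTop :=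
      tendsto_exp_atTop.comp tendsto_neg_atBot_atTop
    have h2 : Tendsto (fun θ : ℝ => p₁ * exp (-θ)) atBot atTop :=
      h1.const_mul_atTop hp₁.1
    have h3 : Tendsto (fun θ : ℝ => p₁ * exp (-θ) - p₀) atBot atTop :=
      tendsto_atTop_add_const_right _ (-p₀) h2 |>.congr (fun θ => by ring)
    have h4 : Tendsto (fun θ : ℝ => e * (1 - estar) * (p₁ * exp (-θ) - p₀)) atBot atTop :=
      h3.const_mul_atTop hK
    exact h4.congr (fun θ => (hkey θ).symm)
  · have h1 : Tendsto (fun θ : ℝ => exp (-θ)) atTop (nhds 0) :=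
      tendsto_exp_atBot.comp tendsto_neg_atTop_atBot
    have h2 : Tendsto g atTop
        (nhds ((1 - e) * (-estar) * (p₀ - pstar) + e * (1 - estar) * (p₁ * 0 - pstar))) :=
      tendsto_const_nhds.add (tendsto_const_nhds.mul
        ((tendsto_const_nhds.mul h1).sub tendsto_const_nhds))
    convert h2 using 2
    ring
  · rcases hdr with h | h <;> subst h <;> nlinarith [mul_pos (mul_pos he.1 hp₀.1)
      (sub_pos.mpr he.2), mul_pos (mul_pos he.1 hp₀.1) (sub_pos.mpr hestar.2),
      mul_pos he.1 hpstar.1, mul_pos hestar.1 hpstar.1]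
  · intro θ
    rw [hkey θ]
    constructor
    · intro h0
      have h1 : p₁ * exp (-θ) - p₀ = 0 := by
        rcases mul_eq_zero.mp h0 with h | h
        · exact absurd h (ne_of_gt hK)
        · exact h
      have h2 : exp (-θ) = p₀ / p₁ := by
        rw [eq_div_iff (ne_of_gt hp₁.1)]; linarith [mul_comm p₁ (exp (-θ))]
      have h3 : -θ = Real.log (p₀ / p₁) := by rw [← h2, Real.log_exp]
      rw [Real.log_div (ne_of_gt hp₀.1) (ne_of_gt hp₁.1)] at h3
      rw [Real.log_div (ne_of_gt hp₁.1) (ne_of_gt hp₀.1)]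
      linarith
    · intro hθ
      subst hθ
      rw [Real.exp_neg, Real.exp_log (div_pos hp₁.1 hp₀.1)]
      rw [inv_div]
      have : p₁ * (p₀ / p₁) = p₀ := by rw [mul_comm, div_mul_cancel₀ _ (ne_of_gt hp₁.1)]
      rw [this, sub_self, mul_zero]
end

section
/- (Existence and uniqueness of the solution to the risk-difference estimating equation.) Let e, p₀, p₁, e*, p* ∈ (0,1) and suppose e* = e or p* = p₀. Define g(θ) = (1−e)(−e*)(p₀ − p*) + e(1−e*)(p₁ − tanh(θ) − p*) for θ ∈ ℝ (this is E[(A−e*)(Y − A·tanh(θ) − p*)] under the distribution with P(A=1)=e, P(Y=1|A=a)=p_a). Then g is strictly decreasing on ℝ, the limit of g(θ) as θ → −∞ is strictly positive, the limit of g(θ) as θ → +∞ is strictly negative, and g has a unique zero, which equals arctanh(p₁ − p₀). -/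
open Real Filter

lemma tanh_eq' (x : ℝ) : Real.tanh x = (Real.exp (2*x) - 1) / (Real.exp (2*x) + 1) := by
  rw [Real.tanh_eq_sinh_div_cosh, Real.sinh_eq, Real.cosh_eq]
  have h1 : Real.exp (2*x) = Real.exp x * Real.exp x := by
    rw [two_mul, Real.exp_add]
  have h2 : Real.exp (-x) = (Real.exp x)⁻¹ := Real.exp_neg x
  have h3 : Real.exp x ≠ 0 := (Real.exp_pos x).ne'
  have h4 : Real.exp x * Real.exp x + 1 ≠ 0 := by positivity
  rw [h1, h2]
  field_simp

lemma strictMono_tanh' : StrictMono Real.tanh := by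
  intro a b hab
  rw [tanh_eq', tanh_eq']
  have ha : (0:ℝ) < Real.exp (2*a) := Real.exp_pos _
  have hb : (0:ℝ) < Real.exp (2*b) := Real.exp_pos _
  have hlt : Real.exp (2*a) < Real.exp (2*b) := Real.exp_lt_exp.2 (by linarith)
  rw [div_lt_div_iff₀ (by linarith) (by linarith)]
  nlinarith

lemma tanh_mem_Ioo (x : ℝ) : Real.tanh x ∈ Set.Ioo (-1:ℝ) 1 := by
  rw [tanh_eq']
  have h : (0:ℝ) < Real.exp (2*x) := Real.exp_pos _
  constructor
  · rw [lt_div_iff₀ (by linarith)]; linarith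
  · rw [div_lt_one (by linarith)]; linarith

lemma tendsto_tanh_atTop : Tendsto Real.tanh atTop (nhds 1) := by
  have hu : Tendsto (fun x : ℝ => Real.exp (2*x) + 1) atTop atTop :=
    (Real.tendsto_exp_atTop.comp (tendsto_id.const_mul_atTop two_pos)).atTop_add tendsto_const_nhds
  have h1 : Tendsto (fun x : ℝ => 2 / (Real.exp (2*x) + 1)) atTop (nhds 0) := by
    have := (hu.inv_tendsto_atTop).const_mul (2:ℝ)
    simpa [div_eq_mul_inv] using this
  have h2 : Tendsto (fun x : ℝ => 1 - 2 / (Real.exp (2*x) + 1)) atTop (nhds 1) := by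
    simpa using (tendsto_const_nhds (x := (1:ℝ)) (f := atTop)).sub h1
  refine h2.congr fun x => ?_
  rw [tanh_eq']
  have h : (0:ℝ) < Real.exp (2*x) := Real.exp_pos _
  field_simp
  ring

lemma tendsto_tanh_atBot : Tendsto Real.tanh atBot (nhds (-1)) := by
  have hu : Tendsto (fun x : ℝ => Real.exp (2*x)) atBot (nhds 0) :=
    Real.tendsto_exp_atBot.comp (tendsto_id.const_mul_atBot two_pos)
  have hnum : Tendsto (fun x : ℝ => Real.exp (2*x) - 1) atBot (nhds (0 - 1)) :=
    hu.sub tendsto_const_nhds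
  have hden : Tendsto (fun x : ℝ => Real.exp (2*x) + 1) atBot (nhds (0 + 1)) :=
    hu.add tendsto_const_nhds
  have := hnum.div hden (by norm_num)
  simp only [zero_sub, zero_add, div_one] at this
  exact this.congr fun x => (tanh_eq' x).symm

lemma tanh_arctanh' {y : ℝ} (hy : y ∈ Set.Ioo (-1:ℝ) 1) : Real.tanh (arctanh y) = y := by
  have h1 : (0:ℝ) < 1 + y := by linarith [hy.1]
  have h2 : (0:ℝ) < 1 - y := by linarith [hy.2]
  have hu : Real.exp (2 * arctanh y) = (1 + y) / (1 - y) := by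
    rw [arctanh]
    rw [show 2 * ((1/2) * Real.log ((1+y)/(1-y))) = Real.log ((1+y)/(1-y)) by ring]
    exact Real.exp_log (by positivity)
  rw [tanh_eq', hu]
  have h3 : (1 + y) / (1 - y) + 1 ≠ 0 := by positivity
  field_simp
  ring

/-- Existence and uniqueness of the solution to the risk-difference estimating
equation: the population estimating function
`g(θ) = (1−e)(−e*)(p₀ − p*) + e(1−e*)(p₁ − tanh θ − p*)` is strictly decreasing,
has a strictly positive limit as `θ → −∞`, a strictly negative limit as
`θ → +∞`, and its unique zero is `arctanh(p₁ − p₀)`, provided `e* = e` or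
`p* = p₀`. -/
theorem rd_estimating_equation_unique_root (e p₀ p₁ estar pstar : ℝ)
    (he : e ∈ Set.Ioo (0:ℝ) 1) (hp₀ : p₀ ∈ Set.Ioo (0:ℝ) 1)
    (hp₁ : p₁ ∈ Set.Ioo (0:ℝ) 1) (hestar : estar ∈ Set.Ioo (0:ℝ) 1)
    (hpstar : pstar ∈ Set.Ioo (0:ℝ) 1) (hdr : estar = e ∨ pstar = p₀) :
    let g : ℝ → ℝ := fun θ =>
      (1 - e) * (-estar) * (p₀ - pstar) + e * (1 - estar) * (p₁ - tanh θ - pstar)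
    StrictAnti g ∧
    (Tendsto g atBot
        (nhds ((1 - e) * (-estar) * (p₀ - pstar) + e * (1 - estar) * (p₁ + 1 - pstar))) ∧
      0 < (1 - e) * (-estar) * (p₀ - pstar) + e * (1 - estar) * (p₁ + 1 - pstar)) ∧
    (Tendsto g atTop
        (nhds ((1 - e) * (-estar) * (p₀ - pstar) + e * (1 - estar) * (p₁ - 1 - pstar))) ∧
      (1 - e) * (-estar) * (p₀ - pstar) + e * (1 - estar) * (p₁ - 1 - pstar) < 0) ∧
    ∀ θ : ℝ, g θ = 0 ↔ θ = arctanh (p₁ - p₀) := by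
  intro g
  set d : ℝ := p₁ - p₀ with hd
  have hdIoo : d ∈ Set.Ioo (-1:ℝ) 1 :=
    ⟨by simp only [hd]; linarith [hp₁.1, hp₀.2], by simp only [hd]; linarith [hp₁.2, hp₀.1]⟩
  obtain ⟨C, hC, hg, hLb, hLt⟩ :
      ∃ C : ℝ, 0 < C ∧ (∀ θ, g θ = C * (d - Real.tanh θ)) ∧
        (1 - e) * (-estar) * (p₀ - pstar) + e * (1 - estar) * (p₁ + 1 - pstar) = C * (d + 1) ∧
        (1 - e) * (-estar) * (p₀ - pstar) + e * (1 - estar) * (p₁ - 1 - pstar) = C * (d - 1) := by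
    rcases hdr with h | h
    · exact ⟨e * (1 - e), by nlinarith [he.1, he.2],
        fun θ => by simp only [g, hd, h]; ring, by rw [h]; ring, by rw [h]; ring⟩
    · exact ⟨e * (1 - estar), by nlinarith [he.1, hestar.2],
        fun θ => by simp only [g, hd, h]; ring, by rw [h]; ring, by rw [h]; ring⟩
  refine ⟨?_, ⟨?_, ?_⟩, ⟨?_, ?_⟩, ?_⟩
  · intro a b hab
    rw [hg a, hg b]
    have := strictMono_tanh' hab
    nlinarith
  · rw [hLb]
    have : Tendsto (fun θ : ℝ => C * (d - Real.tanh θ)) atBot (nhds (C * (d - (-1)))) :=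
      (tendsto_const_nhds.sub tendsto_tanh_atBot).const_mul C
    simp only [sub_neg_eq_add] at this
    exact this.congr fun θ => (hg θ).symm
  · rw [hLb]; nlinarith [hdIoo.1]
  · rw [hLt]
    have : Tendsto (fun θ : ℝ => C * (d - Real.tanh θ)) atTop (nhds (C * (d - 1))) :=
      (tendsto_const_nhds.sub tendsto_tanh_atTop).const_mul C
    exact this.congr fun θ => (hg θ).symm
  · rw [hLt]; nlinarith [hdIoo.2]
  · intro θ
    rw [hg θ]
    constructor
    · intro h
      have ht : Real.tanh θ = d := by
        rcases mul_eq_zero.1 h with h' | h'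
        · exact absurd h' hC.ne'
        · linarith
      have := tanh_arctanh' hdIoo
      exact strictMono_tanh'.injective (by rw [ht, this])
    · intro h
      rw [h, tanh_arctanh' hdIoo]
      ring
end

section
/- (Boundedness of the efficient score for the risk difference under positivity.) Let σ ∈ (0, 1/2) and suppose e, p₀ ∈ (σ, 1−σ) while p₁ ∈ (0,1) is arbitrary. Set ρ = p₁ − p₀, D = (1−e)/(p₀(1−p₀)) + e/(p₁(1−p₁)), h* = (1−ρ²)·e/(p₁(1−p₁)·D), ω = h*/(e·p₀(1−p₀)), and S(a, y) = ω·(a − e)·(y − a·ρ − p₀) for a, y ∈ {0,1}. Then |S(a,y)| ≤ 1/σ³ for all a, y ∈ {0,1}. -/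
/-!
Clearing the nested fractions, the weight simplifies to
`ω = (1 - ρ²) / ((1 - e) p₁(1 - p₁) + e p₀(1 - p₀))`. Its numerator lies in `(0, 1]` and its
denominator exceeds `e p₀(1 - p₀) > σ · σ²`, so `0 ≤ ω ≤ 1/σ³`. Both remaining factors of `S` are
differences of two numbers in `[0, 1]`, since `a ρ + p₀` is `p₀` or `p₁`; hence `|S| ≤ ω`.
-/

open Set

lemma div_mul_inv_add_div_div {K : Type*} [Field K] (N e v₀ v₁ : K)
    (he : e ≠ 0) (hv₀ : v₀ ≠ 0) (hv₁ : v₁ ≠ 0) :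
    N * e / (v₁ * ((1 - e) / v₀ + e / v₁)) / (e * v₀) = N / ((1 - e) * v₁ + e * v₀) := by
  have hmix : v₁ * ((1 - e) / v₀ + e / v₁) = ((1 - e) * v₁ + e * v₀) / v₀ := by
    field_simp
  rw [hmix, div_div_eq_mul_div, div_div, mul_assoc N, mul_div_mul_right _ _ (mul_ne_zero he hv₀)]

lemma sq_lt_mul_one_sub {σ p : ℝ} (hσ : 0 < σ) (hp : p ∈ Ioo σ (1 - σ)) :
    σ ^ 2 < p * (1 - p) := by
  rw [sq]
  exact mul_lt_mul'' hp.1 (by linarith [hp.2]) hσ.le hσ.le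

lemma abs_div_le_one_div {N d c : ℝ} (hN : |N| ≤ 1) (hc : 0 < c) (hcd : c ≤ d) :
    |N / d| ≤ 1 / c := by
  rw [abs_div, abs_of_pos (hc.trans_le hcd)]
  calc |N| / d ≤ 1 / d := by gcongr; linarith
    _ ≤ 1 / c := by gcongr

lemma abs_mul_mul_le_of_abs_le_one {w x z : ℝ} (hx : |x| ≤ 1) (hz : |z| ≤ 1) :
    |w * x * z| ≤ |w| := by
  rw [abs_mul, abs_mul, mul_assoc]
  exact mul_le_of_le_one_right (abs_nonneg w) (mul_le_one₀ hx (abs_nonneg z) hz)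

lemma natCast_mem_Icc_of_mem_zero_one {a : ℕ} (ha : a ∈ ({0, 1} : Finset ℕ)) :
    (a : ℝ) ∈ Icc 0 1 := by
  rcases Finset.mem_insert.1 ha with rfl | ha
  · simp
  · rw [Finset.mem_singleton.1 ha]; simp

lemma abs_sub_mul_sub_sub_le_one {a y p₀ p₁ : ℝ} (ha : a ∈ Icc 0 1) (hy : y ∈ Icc 0 1)
    (hp₀ : p₀ ∈ Icc 0 1) (hp₁ : p₁ ∈ Icc 0 1) : |y - a * (p₁ - p₀) - p₀| ≤ 1 := by
  obtain ⟨ha₀, ha₁⟩ := ha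
  obtain ⟨hp₀₀, hp₀₁⟩ := hp₀
  obtain ⟨hp₁₀, hp₁₁⟩ := hp₁
  -- `a (p₁ - p₀) + p₀ = (1 - a) p₀ + a p₁` is a convex combination of `p₀` and `p₁`
  rw [sub_sub]
  exact abs_sub_le_of_nonneg_of_le hy.1 hy.2 (by nlinarith) (by nlinarith)

/-- Boundedness of the efficient score for the risk difference under positivity:
if `e, p₀ ∈ (σ, 1−σ)` with `σ ∈ (0, 1/2)` and `p₁ ∈ (0,1)`, then with
`ρ = p₁ − p₀` the efficient score `S(a,y) = ω(a − e)(y − aρ − p₀)` satisfies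
`|S(a,y)| ≤ 1/σ³` for all `a, y ∈ {0,1}`. -/
theorem rd_efficient_score_bounded (σ e p₀ p₁ : ℝ)
    (hσ : σ ∈ Set.Ioo (0:ℝ) (1/2))
    (he : e ∈ Set.Ioo σ (1 - σ)) (hp₀ : p₀ ∈ Set.Ioo σ (1 - σ))
    (hp₁ : p₁ ∈ Set.Ioo (0:ℝ) 1) :
    let ρ : ℝ := p₁ - p₀
    let D : ℝ := (1 - e) / (p₀ * (1 - p₀)) + e / (p₁ * (1 - p₁))
    let hstar : ℝ := (1 - ρ ^ 2) * e / (p₁ * (1 - p₁) * D)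
    let ω : ℝ := hstar / (e * p₀ * (1 - p₀))
    let S : ℕ → ℕ → ℝ := fun a y => ω * ((a : ℝ) - e) * ((y : ℝ) - (a : ℝ) * ρ - p₀)
    ∀ a ∈ ({0, 1} : Finset ℕ), ∀ y ∈ ({0, 1} : Finset ℕ), |S a y| ≤ 1 / σ ^ 3 := by
  intro ρ D hstar ω S a ha y hy
  have hσ₀ : 0 < σ := hσ.1
  have he₀ : 0 < e := hσ₀.trans he.1
  have hv₀ : σ ^ 2 < p₀ * (1 - p₀) := sq_lt_mul_one_sub hσ₀ hp₀
  have hv₁ : 0 < p₁ * (1 - p₁) := mul_pos hp₁.1 (sub_pos.2 hp₁.2)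
  have hω : ω = (1 - ρ ^ 2) / ((1 - e) * (p₁ * (1 - p₁)) + e * (p₀ * (1 - p₀))) := by
    simp only [ω, hstar, D, mul_assoc e p₀]
    exact div_mul_inv_add_div_div _ _ _ _ he₀.ne' (by nlinarith) hv₁.ne'
  have hω_le : |ω| ≤ 1 / σ ^ 3 := by
    rw [hω]
    refine abs_div_le_one_div (abs_le.2 ⟨?_, ?_⟩) (by positivity) ?_
    · nlinarith [hp₀.1, hp₀.2, hp₁.1, hp₁.2]
    · nlinarith
    · nlinarith [he.1, he.2]
  have hIcc : ∀ {p : ℝ}, p ∈ Ioo σ (1 - σ) → p ∈ Icc 0 1 :=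
    fun hp => ⟨by linarith [hp.1], by linarith [hp.2]⟩
  have ha' := natCast_mem_Icc_of_mem_zero_one ha
  refine (abs_mul_mul_le_of_abs_le_one ?_ ?_).trans hω_le
  · exact abs_sub_le_of_nonneg_of_le ha'.1 ha'.2 (hIcc he).1 (hIcc he).2
  · exact abs_sub_mul_sub_sub_le_one ha' (natCast_mem_Icc_of_mem_zero_one hy) (hIcc hp₀)
      (Ioo_subset_Icc_self hp₁)
end
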